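/- arXiv:1111.3399 — 4 statements merged into one kernel-verified Lean document; each statement's English description precedes it below -/
import Mathlib

section
/- Let U and D be the operators built from the multiplicity function κ and a nowhere-vanishing function 𝗊 : P → ℂ. (1) If there exists t ∈ ℂ such that the commutator satisfies [D,U] δ_λ = (2|λ| + t) δ_λ for every λ ∈ 𝔾, then κ is UD-self-dual. (2) If κ is UD-self-dual, then [D,U] δ_λ = (2|λ| + t) δ_λ holds for every λ ∈ 𝔾 if and only if the function 𝗊² satisfies the Kerov condition with parameter t; in that case necessarily t = Σ_{ν ↘ ∅} κ(∅,ν)² 𝗊(ν∖∅)². -/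
open scoped BigOperators Classical

namespace IdealGraph

variable {P : Type*} [PartialOrder P]

/-- A finite order ideal of the poset `P`, encoded as a down-closed `Finset`. -/
def IsIdealF (s : Finset P) : Prop := ∀ ⦃x⦄, x ∈ s → ∀ ⦃y⦄, y ≤ x → y ∈ s

/-- The vertex set of the branching graph of ideals `𝔾 = J(P)`. -/
abbrev G (P : Type*) [PartialOrder P] := {s : Finset P // IsIdealF s}

/-- The `n`-th level `𝔾_n` of the branching graph. -/
abbrev Lvl (P : Type*) [PartialOrder P] (n : ℕ) := {s : Finset P // IsIdealF s ∧ s.card = n}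

/-- `CoversF μ l` : `μ ↗ l` is an edge of the branching graph of ideals. -/
def CoversF (μ l : Finset P) : Prop :=
  IsIdealF μ ∧ IsIdealF l ∧ μ ⊆ l ∧ l.card = μ.card + 1

/-- All levels `𝔾_n` of the graph are finite. -/
def LevelsFinite (P : Type*) [PartialOrder P] : Prop :=
  ∀ n : ℕ, {s : Finset P | IsIdealF s ∧ s.card = n}.Finite

/-- An edge multiplicity function is (strictly) positive on all edges. -/
def EdgePositive (κ : Finset P → Finset P → ℝ) : Prop :=
  ∀ μ l, CoversF μ l → 0 < κ μ l

/-- UD-self-duality of a multiplicity function: for every quadrangle `μ ρ ν λ`. -/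
def UDSelfDual (κ : Finset P → Finset P → ℝ) : Prop :=
  ∀ μ ρ l ν : Finset P, CoversF μ ρ → CoversF ρ ν → CoversF μ l → CoversF l ν →
    ρ ≠ l → κ μ l * κ μ ρ = κ l ν * κ ρ ν

/-- The value of a function `q : P → R` on the box `l ∖ μ` of an edge `μ ↗ l`. -/
noncomputable def bx {R : Type*} [AddCommMonoid R] (q : P → R) (μ l : Finset P) : R :=
  ∑ x ∈ l \ μ, q x

/-- The Kerov condition with parameter `t` for the function `q2 = 𝗊²`. -/
def KerovCond (κ : Finset P → Finset P → ℝ) (q2 : P → ℂ) (t : ℂ) : Prop :=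
  ∀ l : Finset P, IsIdealF l →
    (∑' ν : {ν : Finset P // CoversF l ν}, (κ l ν.1 : ℂ) ^ 2 * bx q2 l ν.1) -
      (∑' μ : {μ : Finset P // CoversF μ l}, (κ μ.1 l : ℂ) ^ 2 * bx q2 μ.1 l)
      = 2 * (l.card : ℂ) + t

/-- Weighted number of saturated chains of length `n` from the ideal `μ` up to the ideal `l`. -/
noncomputable def dimRel (κ : Finset P → Finset P → ℝ) : ℕ → Finset P → Finset P → ℝ
  | 0, μ, l => if μ = l then 1 else 0
  | n + 1, μ, l =>
      ∑ x ∈ l, if CoversF (l.erase x) l ∧ μ ⊆ l.erase x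
        then κ (l.erase x) l * dimRel κ n μ (l.erase x) else 0

/-- Relative dimension `dim(μ, l)`. -/
noncomputable def dimI (κ : Finset P → Finset P → ℝ) (μ l : Finset P) : ℝ :=
  dimRel κ (l.card - μ.card) μ l

/-- Dimension `dim l = dim(∅, l)`. -/
noncomputable def dimT (κ : Finset P → Finset P → ℝ) (l : Finset P) : ℝ :=
  dimI κ ∅ l

/-- The relative dimension function `P*_μ`. -/
noncomputable def Pstar (κ : Finset P → Finset P → ℝ) (μ l : Finset P) : ℝ :=
  (l.card.descFactorial μ.card : ℝ) * dimI κ μ l / dimT κ l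

/-- The mixed measure `M_ξ`. -/
noncomputable def Mxi (κ : Finset P → Finset P → ℝ) (q : P → ℝ) (t ξ : ℝ) (l : Finset P) : ℝ :=
  (1 - ξ) ^ t * ξ ^ l.card * (dimT κ l / (Nat.factorial l.card : ℝ)) ^ 2 * ∏ x ∈ l, q x ^ 2

/-- The coherent measure `M_n(l)` (for `n = |l|`). -/
noncomputable def Mcoh (κ : Finset P → Finset P → ℝ) (q : P → ℝ) (t : ℝ) (l : Finset P) : ℝ :=
  dimT κ l ^ 2 * (∏ x ∈ l, q x ^ 2) /
    ((Nat.factorial l.card : ℝ) * Polynomial.eval t (ascPochhammer ℝ l.card))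

/-- The jump rates `Q(l, ρ)` of the Markov jump dynamics. -/
noncomputable def Qrate (κ : Finset P → Finset P → ℝ) (q : P → ℝ) (t ξ : ℝ)
    (l ρ : Finset P) : ℝ :=
  if CoversF ρ l then (1 - ξ)⁻¹ * l.card * (κ ρ l * dimT κ ρ / dimT κ l)
  else if CoversF l ρ then
    (1 - ξ)⁻¹ * (ξ * ((l.card : ℝ) + t)) *
      ((Mcoh κ q t ρ / Mcoh κ q t l) * (κ l ρ * dimT κ l / dimT κ ρ))
  else if ρ = l then -((1 - ξ)⁻¹ * ((l.card : ℝ) + ξ * ((l.card : ℝ) + t)))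
  else 0

/-- The function `𝔐_l`. -/
noncomputable def Mfrak (κ : Finset P → Finset P → ℝ) (q : P → ℝ) (ξ : ℝ)
    (l ν : Finset P) : ℝ :=
  ∑ μ ∈ l.powerset.filter (fun s => IsIdealF s),
    (ξ / (ξ - 1)) ^ (l.card - μ.card) *
      (dimI κ μ l / (Nat.factorial (l.card - μ.card) : ℝ)) *
      (∏ x ∈ l \ μ, q x ^ 2) * Pstar κ μ ν

/-- The operator `U` built from `κ` and `q`. -/
noncomputable def Uop (κ : Finset P → Finset P → ℝ) (q : P → ℂ) (f : Finset P → ℂ) :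
    Finset P → ℂ :=
  fun l => ∑' μ : {μ : Finset P // CoversF μ l}, (κ μ.1 l : ℂ) * bx q μ.1 l * f μ.1

/-- The operator `D` built from `κ` and `q`. -/
noncomputable def Dop (κ : Finset P → Finset P → ℝ) (q : P → ℂ) (f : Finset P → ℂ) :
    Finset P → ℂ :=
  fun l => ∑' ν : {ν : Finset P // CoversF l ν}, (κ l ν.1 : ℂ) * bx q l ν.1 * f ν.1

/-- The standard basis vector `δ_l`. -/
noncomputable def delta (l : Finset P) : Finset P → ℂ := fun ρ => if ρ = l then 1 else 0


section Aux

variable {κ : Finset P → Finset P → ℝ} {q : P → ℂ}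

lemma sd_singleton {μ l : Finset P} (h : CoversF μ l) : ∃ a, l \ μ = {a} := by
  have hcard : (l \ μ).card = 1 := by
    rw [Finset.card_sdiff_of_subset h.2.2.1, h.2.2.2]; omega
  exact Finset.card_eq_one.mp hcard

lemma bx_sq {μ l : Finset P} (h : CoversF μ l) :
    bx (fun x => q x ^ 2) μ l = (bx q μ l) ^ 2 := by
  obtain ⟨a, ha⟩ := sd_singleton h
  simp [bx, ha]

lemma bx_ne_zero (hq : ∀ x, q x ≠ 0) {μ l : Finset P} (h : CoversF μ l) :
    bx q μ l ≠ 0 := by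
  obtain ⟨a, ha⟩ := sd_singleton h
  simp [bx, ha, hq a]

lemma isIdealF_union {s t : Finset P} (h1 : IsIdealF s) (h2 : IsIdealF t) :
    IsIdealF (s ∪ t) := by
  intro x hx y hy
  rcases Finset.mem_union.mp hx with hx | hx
  · exact Finset.mem_union_left _ (h1 hx hy)
  · exact Finset.mem_union_right _ (h2 hx hy)

lemma isIdealF_inter {s t : Finset P} (h1 : IsIdealF s) (h2 : IsIdealF t) :
    IsIdealF (s ∩ t) := by
  intro x hx y hy
  exact Finset.mem_inter.mpr ⟨h1 (Finset.mem_inter.mp hx).1 hy,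
    h2 (Finset.mem_inter.mp hx).2 hy⟩

/-- Given a common cover of `ρ ≠ l`, necessarily `ν = ρ ∪ l`, and `ρ ∩ l` is covered by both. -/
lemma up_unique {ρ l ν : Finset P} (hne : ρ ≠ l)
    (h1 : CoversF ρ ν) (h2 : CoversF l ν) :
    ν = ρ ∪ l ∧ CoversF (ρ ∩ l) ρ ∧ CoversF (ρ ∩ l) l := by
  have hcard : ρ.card = l.card := by
    have e1 := h1.2.2.2; have e2 := h2.2.2.2; omega
  have hsub : ρ ∪ l ⊆ ν := Finset.union_subset h1.2.2.1 h2.2.2.1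
  have hlt : ρ ⊂ ρ ∪ l := by
    refine Finset.ssubset_iff_subset_ne.mpr ⟨Finset.subset_union_left, fun e => hne ?_⟩
    have : l ⊆ ρ := by rw [e]; exact Finset.subset_union_right
    exact (Finset.eq_of_subset_of_card_le this (le_of_eq hcard)).symm
  have hcnu : ν.card ≤ (ρ ∪ l).card := by
    have := Finset.card_lt_card hlt
    have := h1.2.2.2
    omega
  have hν : ν = ρ ∪ l := (Finset.eq_of_subset_of_card_le hsub hcnu).symm
  have hci : (ρ ∩ l).card + 1 = ρ.card := by
    have := Finset.card_union_add_card_inter ρ l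
    have := h1.2.2.2
    rw [hν] at this
    omega
  refine ⟨hν, ⟨isIdealF_inter h1.1 h2.1, h1.1, Finset.inter_subset_left, hci.symm⟩,
    ⟨isIdealF_inter h1.1 h2.1, h2.1, Finset.inter_subset_right, by omega⟩⟩

/-- Given a common co-cover of `ρ ≠ l`, necessarily `μ = ρ ∩ l`, and `ρ ∪ l` covers both. -/
lemma down_unique {μ ρ l : Finset P} (hne : ρ ≠ l)
    (h1 : CoversF μ ρ) (h2 : CoversF μ l) :
    μ = ρ ∩ l ∧ CoversF ρ (ρ ∪ l) ∧ CoversF l (ρ ∪ l) := by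
  have hcard : ρ.card = l.card := by
    have e1 := h1.2.2.2; have e2 := h2.2.2.2; omega
  have hsub : μ ⊆ ρ ∩ l := Finset.subset_inter h1.2.2.1 h2.2.2.1
  have hlt : ρ ∩ l ⊂ ρ := by
    refine Finset.ssubset_iff_subset_ne.mpr ⟨Finset.inter_subset_left, fun e => hne ?_⟩
    have : ρ ⊆ l := by rw [← e]; exact Finset.inter_subset_right
    exact Finset.eq_of_subset_of_card_le this (le_of_eq hcard.symm)
  have hcle : (ρ ∩ l).card ≤ μ.card := by
    have := Finset.card_lt_card hlt
    have := h1.2.2.2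
    omega
  have hμeq : μ = ρ ∩ l := Finset.eq_of_subset_of_card_le hsub hcle
  have hcu : (ρ ∪ l).card = ρ.card + 1 := by
    have h3 := Finset.card_union_add_card_inter ρ l
    rw [← hμeq] at h3
    have := h1.2.2.2
    omega
  exact ⟨hμeq, ⟨h1.2.1, isIdealF_union h1.2.1 h2.2.1, Finset.subset_union_left, hcu⟩,
    ⟨h2.2.1, isIdealF_union h1.2.1 h2.2.1, Finset.subset_union_right, by omega⟩⟩

lemma box_eq_left {ρ l : Finset P} : (ρ ∪ l) \ ρ = l \ (ρ ∩ l) := by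
  ext x; simp only [Finset.mem_sdiff, Finset.mem_union, Finset.mem_inter]; tauto

lemma box_eq_right {ρ l : Finset P} : (ρ ∪ l) \ l = ρ \ (ρ ∩ l) := by
  ext x; simp only [Finset.mem_sdiff, Finset.mem_union, Finset.mem_inter]; tauto

lemma Uop_delta (κ : Finset P → Finset P → ℝ) (q : P → ℂ) (l ν : Finset P) :
    Uop κ q (delta l) ν = if CoversF l ν then (κ l ν : ℂ) * bx q l ν else 0 := by
  unfold Uop
  by_cases h : CoversF l ν
  · rw [if_pos h, tsum_eq_single (⟨l, h⟩ : {μ : Finset P // CoversF μ ν})]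
    · simp [delta]
    · rintro ⟨μ, hμ⟩ hne
      have hμl : μ ≠ l := fun e => hne (Subtype.ext e)
      simp [delta, hμl]
  · rw [if_neg h]
    have hz : ∀ b : {μ : Finset P // CoversF μ ν},
        (κ b.1 ν : ℂ) * bx q b.1 ν * delta l b.1 = 0 := by
      rintro ⟨μ, hμ⟩
      have hμl : μ ≠ l := fun e => h (e ▸ hμ)
      simp [delta, hμl]
    rw [tsum_congr hz]; exact tsum_zero

lemma Dop_delta (κ : Finset P → Finset P → ℝ) (q : P → ℂ) (l μ : Finset P) :
    Dop κ q (delta l) μ = if CoversF μ l then (κ μ l : ℂ) * bx q μ l else 0 := by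
  unfold Dop
  by_cases h : CoversF μ l
  · rw [if_pos h, tsum_eq_single (⟨l, h⟩ : {ν : Finset P // CoversF μ ν})]
    · simp [delta]
    · rintro ⟨ν, hν⟩ hne
      have hνl : ν ≠ l := fun e => hne (Subtype.ext e)
      simp [delta, hνl]
  · rw [if_neg h]
    have hz : ∀ b : {ν : Finset P // CoversF μ ν},
        (κ μ b.1 : ℂ) * bx q μ b.1 * delta l b.1 = 0 := by
      rintro ⟨ν, hν⟩
      have hνl : ν ≠ l := fun e => h (e ▸ hν)
      simp [delta, hνl]
    rw [tsum_congr hz]; exact tsum_zero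

lemma DU_diag (κ : Finset P → Finset P → ℝ) (q : P → ℂ) (l : Finset P) :
    Dop κ q (Uop κ q (delta l)) l
      = ∑' ν : {ν : Finset P // CoversF l ν}, (κ l ν.1 : ℂ) ^ 2
          * bx (fun x => q x ^ 2) l ν.1 := by
  unfold Dop
  apply tsum_congr
  rintro ⟨ν, hν⟩
  rw [Uop_delta, if_pos hν, bx_sq hν]
  ring

lemma UD_diag (κ : Finset P → Finset P → ℝ) (q : P → ℂ) (l : Finset P) :
    Uop κ q (Dop κ q (delta l)) l
      = ∑' μ : {μ : Finset P // CoversF μ l}, (κ μ.1 l : ℂ) ^ 2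
          * bx (fun x => q x ^ 2) μ.1 l := by
  unfold Uop
  apply tsum_congr
  rintro ⟨μ, hμ⟩
  rw [Dop_delta, if_pos hμ, bx_sq hμ]
  ring

lemma DU_off_ex {ρ l ν : Finset P} (hne : ρ ≠ l)
    (h1 : CoversF ρ ν) (h2 : CoversF l ν) :
    Dop κ q (Uop κ q (delta l)) ρ
      = (κ ρ ν : ℂ) * bx q ρ ν * ((κ l ν : ℂ) * bx q l ν) := by
  unfold Dop
  rw [tsum_eq_single (⟨ν, h1⟩ : {ν' : Finset P // CoversF ρ ν'})]
  · rw [Uop_delta, if_pos h2]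
  · rintro ⟨ν', h1'⟩ hne'
    rw [Uop_delta]
    by_cases h2' : CoversF l ν'
    · exact absurd (Subtype.ext ((up_unique hne h1' h2').1.trans (up_unique hne h1 h2).1.symm))
        hne'
    · rw [if_neg h2', mul_zero]

lemma UD_off_ex {μ ρ l : Finset P} (hne : ρ ≠ l)
    (h1 : CoversF μ ρ) (h2 : CoversF μ l) :
    Uop κ q (Dop κ q (delta l)) ρ
      = (κ μ ρ : ℂ) * bx q μ ρ * ((κ μ l : ℂ) * bx q μ l) := by
  unfold Uop
  rw [tsum_eq_single (⟨μ, h1⟩ : {μ' : Finset P // CoversF μ' ρ})]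
  · rw [Dop_delta, if_pos h2]
  · rintro ⟨μ', h1'⟩ hne'
    rw [Dop_delta]
    by_cases h2' : CoversF μ' l
    · exact absurd (Subtype.ext ((down_unique hne h1' h2').1.trans
        (down_unique hne h1 h2).1.symm)) hne'
    · rw [if_neg h2', mul_zero]

lemma DU_off_none {ρ l : Finset P} (h : ∀ ν, ¬(CoversF ρ ν ∧ CoversF l ν)) :
    Dop κ q (Uop κ q (delta l)) ρ = 0 := by
  unfold Dop
  have hz : ∀ b : {ν : Finset P // CoversF ρ ν},
      (κ ρ b.1 : ℂ) * bx q ρ b.1 * Uop κ q (delta l) b.1 = 0 := by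
    rintro ⟨ν, h1⟩
    rw [Uop_delta, if_neg (fun h2 => h ν ⟨h1, h2⟩), mul_zero]
  rw [tsum_congr hz]; exact tsum_zero

lemma UD_off_none {ρ l : Finset P} (h : ∀ μ, ¬(CoversF μ ρ ∧ CoversF μ l)) :
    Uop κ q (Dop κ q (delta l)) ρ = 0 := by
  unfold Uop
  have hz' : ∀ b : {μ : Finset P // CoversF μ ρ},
      (κ b.1 ρ : ℂ) * bx q b.1 ρ * Dop κ q (delta l) b.1 = 0 := by
    rintro ⟨μ, h1⟩
    rw [Dop_delta, if_neg (fun h2 => h μ ⟨h1, h2⟩), mul_zero]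
  rw [tsum_congr hz']; exact tsum_zero

end Aux

/-- diagonality of the commutator `[D,U]` forces UD-self-duality of `κ`,
and (given UD-self-duality) is equivalent to the Kerov condition for `𝗊²`, in which case
`t` is the sum `Σ_{ν ↘ ∅} κ(∅,ν)² 𝗊(ν∖∅)²`. -/
theorem statement0 {P : Type*} [PartialOrder P]
    (κ : Finset P → Finset P → ℝ) (q : P → ℂ)
    (hκ : EdgePositive κ) (hq : ∀ x : P, q x ≠ 0) (hLF : LevelsFinite P) :
    ((∃ t : ℂ, ∀ l : Finset P, IsIdealF l → ∀ ρ : Finset P,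
        Dop κ q (Uop κ q (delta l)) ρ - Uop κ q (Dop κ q (delta l)) ρ
          = (2 * (l.card : ℂ) + t) * delta l ρ) → UDSelfDual κ) ∧
    (UDSelfDual κ → ∀ t : ℂ,
      ((∀ l : Finset P, IsIdealF l → ∀ ρ : Finset P,
          Dop κ q (Uop κ q (delta l)) ρ - Uop κ q (Dop κ q (delta l)) ρ
            = (2 * (l.card : ℂ) + t) * delta l ρ)
        ↔ KerovCond κ (fun x => q x ^ 2) t) ∧
      ((∀ l : Finset P, IsIdealF l → ∀ ρ : Finset P,
          Dop κ q (Uop κ q (delta l)) ρ - Uop κ q (Dop κ q (delta l)) ρ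
            = (2 * (l.card : ℂ) + t) * delta l ρ) →
        t = ∑' ν : {ν : Finset P // CoversF (∅ : Finset P) ν},
              (κ ∅ ν.1 : ℂ) ^ 2 * bx (fun x => q x ^ 2) ∅ ν.1)) := by
  constructor
  · -- diagonality forces UD-self-duality
    rintro ⟨t, hcomm⟩ μ ρ l ν hμρ hρν hμl hlν hne
    have hl : IsIdealF l := hμl.2.1
    have heq := hcomm l hl ρ
    rw [DU_off_ex hne hρν hlν, UD_off_ex hne hμρ hμl] at heq
    have hδ : delta l ρ = 0 := by simp [delta, hne]
    rw [hδ, mul_zero] at heq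
    have hμeq : μ = ρ ∩ l := (down_unique hne hμρ hμl).1
    have hνeq : ν = ρ ∪ l := (up_unique hne hρν hlν).1
    have hA : bx q ρ ν = bx q μ l := by
      unfold bx; rw [hνeq, hμeq, box_eq_left]
    have hB : bx q l ν = bx q μ ρ := by
      unfold bx; rw [hνeq, hμeq, box_eq_right]
    rw [hA, hB] at heq
    have hAne : bx q μ l ≠ 0 := bx_ne_zero hq hμl
    have hBne : bx q μ ρ ≠ 0 := bx_ne_zero hq hμρ
    have h2 : ((κ ρ ν * κ l ν : ℝ) : ℂ) = ((κ μ ρ * κ μ l : ℝ) : ℂ) := by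
      apply mul_right_cancel₀ (mul_ne_zero hAne hBne)
      push_cast
      linear_combination heq
    have h3 : κ ρ ν * κ l ν = κ μ ρ * κ μ l := by exact_mod_cast h2
    linear_combination -h3
  · intro hsd t
    refine ⟨⟨?_, ?_⟩, ?_⟩
    · -- commutator relation ⇒ Kerov condition
      intro hcomm l hl
      have heq := hcomm l hl l
      rw [DU_diag, UD_diag] at heq
      simpa [delta] using heq
    · -- Kerov condition ⇒ commutator relation
      intro hker l hl ρ
      by_cases hρl : ρ = l
      · subst hρl
        rw [DU_diag, UD_diag, hker ρ hl]
        simp [delta]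
      · have hδ : delta l ρ = 0 := by simp [delta, hρl]
        rw [hδ, mul_zero]
        by_cases hex : ∃ μ, CoversF μ ρ ∧ CoversF μ l
        · obtain ⟨μ, hμρ, hμl⟩ := hex
          obtain ⟨hμeq, hρν, hlν⟩ := down_unique hρl hμρ hμl
          rw [DU_off_ex hρl hρν hlν, UD_off_ex hρl hμρ hμl]
          have hA : bx q ρ (ρ ∪ l) = bx q μ l := by
            unfold bx; rw [hμeq, box_eq_left]
          have hB : bx q l (ρ ∪ l) = bx q μ ρ := by
            unfold bx; rw [hμeq, box_eq_right]
          rw [hA, hB]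
          have hk := hsd μ ρ l (ρ ∪ l) hμρ hρν hμl hlν hρl
          have hkc : ((κ μ l : ℝ) : ℂ) * ((κ μ ρ : ℝ) : ℂ)
              = ((κ l (ρ ∪ l) : ℝ) : ℂ) * ((κ ρ (ρ ∪ l) : ℝ) : ℂ) := by
            exact_mod_cast congrArg (fun x : ℝ => (x : ℂ)) hk
          linear_combination -(bx q μ l * bx q μ ρ) * hkc
        · have hnoμ : ∀ μ, ¬(CoversF μ ρ ∧ CoversF μ l) := fun μ h => hex ⟨μ, h⟩
          have hnoν : ∀ ν, ¬(CoversF ρ ν ∧ CoversF l ν) := by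
            rintro ν ⟨h1, h2⟩
            exact hnoμ (ρ ∩ l) ⟨(up_unique hρl h1 h2).2.1, (up_unique hρl h1 h2).2.2⟩
          rw [DU_off_none hnoν, UD_off_none hnoμ, sub_zero]
    · -- the value of t
      intro hcomm
      have hempty : IsIdealF (∅ : Finset P) :=
        fun x hx _ _ => absurd hx (Finset.notMem_empty x)
      have heq := hcomm ∅ hempty ∅
      rw [DU_diag, UD_diag] at heq
      haveI : IsEmpty {μ : Finset P // CoversF μ (∅ : Finset P)} :=
        ⟨fun b => by have := b.2.2.2.2; simp at this⟩
      rw [show (∑' μ : {μ : Finset P // CoversF μ (∅ : Finset P)},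
          (κ μ.1 ∅ : ℂ) ^ 2 * bx (fun x => q x ^ 2) μ.1 ∅) = 0 from tsum_empty] at heq
      have hfin : (∑' ν : {ν : Finset P // CoversF (∅ : Finset P) ν},
          (κ ∅ ν.1 : ℂ) ^ 2 * bx (fun x => q x ^ 2) ∅ ν.1) = t := by
        simpa [delta] using heq
      exact hfin.symm

end IdealGraph
end

section
/- Let κ and κ' be two edge multiplicity functions on 𝔾 = J(P) that are UD-dual, meaning κ(λ,ν) κ'(ρ,ν) = κ'(μ,λ) κ(μ,ρ) for every quadrangle μ, ρ, λ, ν. Then κ and κ' are gauge equivalent: there exists a function g : 𝔾 → ℝ_{>0} such that κ(μ,λ) = (g(μ)/g(λ)) κ'(μ,λ) for every edge μ ↗ λ. -/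
open scoped BigOperators Classical

namespace IdealGraph

variable {P : Type*} [PartialOrder P]

/-! The ratio `r = κ' / κ` has the same product along the two sides of every quadrangle, by
UD-duality. Define `g s` as the product of `r` along the chain `∅ ↗ ⋯ ↗ s` obtained by repeatedly
removing a maximal element. That `g s = g μ * r (μ, s)` for *every* `μ ↗ s`, and not only for the
chosen one, follows by induction on `|s|`: two distinct ideals `μ, ρ ↗ s` both cover `μ ∩ ρ`, and
the quadrangle `μ ∩ ρ ↗ μ, ρ ↗ s` lets one pass from `ρ` to `μ`. -/

lemma IsIdealF.inter {s t : Finset P} (hs : IsIdealF s) (ht : IsIdealF t) : IsIdealF (s ∩ t) :=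
  fun _ hx _ hy => Finset.mem_inter.2 ⟨hs (Finset.mem_of_mem_inter_left hx) hy,
    ht (Finset.mem_of_mem_inter_right hx) hy⟩

lemma IsIdealF.erase_of_maximal {s : Finset P} (hs : IsIdealF s) {m : P}
    (hm : Maximal (· ∈ s) m) : IsIdealF (s.erase m) := by
  intro x hx y hyx
  obtain ⟨hxm, hxs⟩ := Finset.mem_erase.1 hx
  refine Finset.mem_erase.2 ⟨?_, hs hxs hyx⟩
  rintro rfl
  exact hxm (le_antisymm (hm.2 hxs hyx) hyx)

lemma coversF_erase_of_maximal {s : Finset P} (hs : IsIdealF s) {m : P}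
    (hm : Maximal (· ∈ s) m) : CoversF (s.erase m) s :=
  ⟨hs.erase_of_maximal hm, hs, Finset.erase_subset m s,
    (Finset.card_erase_add_one hm.1).symm⟩

lemma CoversF.ssubset {μ l : Finset P} (h : CoversF μ l) : μ ⊂ l :=
  Finset.ssubset_iff_subset_ne.2 ⟨h.2.2.1, by rintro rfl; exact absurd h.2.2.2 (by omega)⟩

lemma CoversF.inter_left {μ ρ ν : Finset P} (hμ : CoversF μ ν) (hρ : CoversF ρ ν) (hne : μ ≠ ρ) :
    CoversF (μ ∩ ρ) μ := by
  obtain ⟨hμi, -, hμν, hcμ⟩ := hμ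
  obtain ⟨hρi, -, hρν, hcρ⟩ := hρ
  have hρμ : ¬ ρ ⊆ μ := fun h => hne (Finset.eq_of_subset_of_card_le h (by omega)).symm
  have hunion : (μ ∪ ρ).card = ν.card := by
    have hlt : μ.card < (μ ∪ ρ).card := Finset.card_lt_card <| Finset.ssubset_iff_subset_ne.2
      ⟨Finset.subset_union_left, fun he => hρμ (Finset.union_eq_left.1 he.symm)⟩
    have hle := Finset.card_le_card (Finset.union_subset hμν hρν)
    omega
  have := Finset.card_union_add_card_inter μ ρ
  exact ⟨hμi.inter hρi, hμi, Finset.inter_subset_left, by omega⟩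

def IsQuadrangleMultiplicative {M : Type*} [Mul M] (r : Finset P → Finset P → M) : Prop :=
  ∀ μ ρ l ν : Finset P, CoversF μ ρ → CoversF ρ ν → CoversF μ l → CoversF l ν →
    ρ ≠ l → r μ ρ * r ρ ν = r μ l * r l ν

lemma isQuadrangleMultiplicative_div_of_dual {κ κ' : Finset P → Finset P → ℝ}
    (hκ : ∀ μ l, CoversF μ l → κ μ l ≠ 0)
    (hdual : ∀ μ ρ l ν : Finset P, CoversF μ ρ → CoversF ρ ν → CoversF μ l → CoversF l ν →
      ρ ≠ l → κ l ν * κ' ρ ν = κ' μ l * κ μ ρ) :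
    IsQuadrangleMultiplicative (fun μ l => κ' μ l / κ μ l) := by
  intro μ ρ l ν h1 h2 h3 h4 hne
  have eq1 := hdual μ ρ l ν h1 h2 h3 h4 hne
  have eq2 := hdual μ l ρ ν h3 h4 h1 h2 (Ne.symm hne)
  rw [div_mul_div_comm, div_mul_div_comm, div_eq_div_iff (mul_ne_zero (hκ _ _ h1) (hκ _ _ h2))
    (mul_ne_zero (hκ _ _ h3) (hκ _ _ h4))]
  linear_combination (κ' μ ρ * κ μ l) * eq1 - (κ' μ l * κ μ ρ) * eq2

noncomputable def gauge {M : Type*} [Monoid M] (r : Finset P → Finset P → M) (s : Finset P) : M :=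
  if h : s.Nonempty then
    let m := (Finset.exists_maximal h).choose
    gauge r (s.erase m) * r (s.erase m) s
  else 1
termination_by s.card
decreasing_by exact Finset.card_erase_lt_of_mem (Finset.exists_maximal h).choose_spec.1

section Gauge

variable {M : Type*} [Monoid M] (r : Finset P → Finset P → M)

lemma gauge_empty : gauge r (∅ : Finset P) = 1 := by
  rw [gauge, dif_neg Finset.not_nonempty_empty]

lemma exists_gauge_eq_of_nonempty {s : Finset P} (hs : s.Nonempty) :
    ∃ m, Maximal (· ∈ s) m ∧ gauge r s = gauge r (s.erase m) * r (s.erase m) s :=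
  ⟨_, (Finset.exists_maximal hs).choose_spec, by rw [gauge, dif_pos hs]⟩

lemma gauge_eq_mul_of_coversF (hr : IsQuadrangleMultiplicative r) {μ s : Finset P}
    (h : CoversF μ s) : gauge r s = gauge r μ * r μ s := by
  induction s using Finset.strongInduction generalizing μ with
  | _ s ih =>
  obtain ⟨m, hm, hgs⟩ := exists_gauge_eq_of_nonempty r (Finset.card_pos.1 (by rw [h.2.2.2]; omega))
  set ρ := s.erase m
  have hρ : CoversF ρ s := coversF_erase_of_maximal h.2.1 hm
  by_cases hμρ : μ = ρ
  · rw [hμρ, hgs]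
  have hσμ := h.inter_left hρ hμρ
  have hσρ : CoversF (μ ∩ ρ) ρ := Finset.inter_comm ρ μ ▸ hρ.inter_left h (Ne.symm hμρ)
  calc gauge r s = gauge r (μ ∩ ρ) * (r (μ ∩ ρ) ρ * r ρ s) := by
        rw [hgs, ih ρ hρ.ssubset hσρ, mul_assoc]
    _ = gauge r (μ ∩ ρ) * (r (μ ∩ ρ) μ * r μ s) := by
        rw [hr _ _ _ _ hσρ hρ hσμ h (Ne.symm hμρ)]
    _ = gauge r μ * r μ s := by rw [ih μ h.ssubset hσμ, mul_assoc]

end Gauge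

lemma gauge_pos {r : Finset P → Finset P → ℝ} (hr : EdgePositive r) {s : Finset P}
    (hs : IsIdealF s) : 0 < gauge r s := by
  induction s using Finset.strongInduction with
  | _ s ih =>
  rcases s.eq_empty_or_nonempty with rfl | hne
  · rw [gauge_empty]; exact one_pos
  obtain ⟨m, hm, hgs⟩ := exists_gauge_eq_of_nonempty r hne
  have hc := coversF_erase_of_maximal hs hm
  rw [hgs]
  exact mul_pos (ih _ hc.ssubset hc.1) (hr _ _ hc)

theorem statement1_general {P : Type*} [PartialOrder P]
    (κ κ' : Finset P → Finset P → ℝ)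
    (hκ : EdgePositive κ) (hκ' : EdgePositive κ')
    (hdual : ∀ μ ρ l ν : Finset P, CoversF μ ρ → CoversF ρ ν → CoversF μ l → CoversF l ν →
      ρ ≠ l → κ l ν * κ' ρ ν = κ' μ l * κ μ ρ) :
    ∃ g : Finset P → ℝ, (∀ s : Finset P, IsIdealF s → 0 < g s) ∧
      ∀ μ l : Finset P, CoversF μ l → κ μ l = (g μ / g l) * κ' μ l := by
  set r : Finset P → Finset P → ℝ := fun μ l => κ' μ l / κ μ l
  have hr : IsQuadrangleMultiplicative r :=
    isQuadrangleMultiplicative_div_of_dual (fun μ l h => (hκ μ l h).ne') hdual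
  have hr_pos : EdgePositive r := fun μ l h => div_pos (hκ' μ l h) (hκ μ l h)
  refine ⟨gauge r, fun s hs => gauge_pos hr_pos hs, fun μ l h => ?_⟩
  rw [gauge_eq_mul_of_coversF r hr h, div_mul_cancel_left₀ (gauge_pos hr_pos h.1).ne', inv_div,
    div_mul_cancel₀ _ (hκ' μ l h).ne']

/-- UD-dual multiplicity functions are gauge equivalent. -/
theorem statement1 {P : Type*} [PartialOrder P]
    (κ κ' : Finset P → Finset P → ℝ)
    (hκ : EdgePositive κ) (hκ' : EdgePositive κ') (hLF : LevelsFinite P)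
    (hdual : ∀ μ ρ l ν : Finset P, CoversF μ ρ → CoversF ρ ν → CoversF μ l → CoversF l ν →
      ρ ≠ l → κ l ν * κ' ρ ν = κ' μ l * κ μ ρ) :
    ∃ g : Finset P → ℝ, (∀ s : Finset P, IsIdealF s → 0 < g s) ∧
      ∀ μ l : Finset P, CoversF μ l → κ μ l = (g μ / g l) * κ' μ l :=
  statement1_general κ κ' hκ hκ' hdual

end IdealGraph
end

section
/- Let P₁ and P₂ be two posets as above and let P = P₁ ⊔ P₂ be their disjoint union (no order relations between the components), so that finite order ideals of P are pairs (λ¹, λ²) of finite order ideals of P₁ and P₂, identifying J(P) ≅ J(P₁) × J(P₂) with |(λ¹,λ²)| = |λ¹| + |λ²|; let κ be the multiplicity function on J(P) induced by multiplicity functions κ₁ on J(P₁) and κ₂ on J(P₂) (an edge of J(P) changes exactly one component and receives the corresponding multiplicity κᵢ). Then a function 𝗊² = (𝗊₁², 𝗊₂²) on P = P₁ ⊔ P₂ satisfies the Kerov condition on J(P) with parameter t if and only if for each i = 1, 2 the function 𝗊ᵢ² satisfies the Kerov condition on J(Pᵢ) with some parameter tᵢ; in that case t = t₁ + t₂. 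-/
/-!
An ideal of `P₁ ⊔ P₂` is a pair `(λ¹, λ²)` of ideals, and an edge of `J(P₁ ⊔ P₂)` changes
exactly one component, with the multiplicity of that component. Hence the upper and lower
covers of `(λ¹, λ²)` split into those of `λ¹` and those of `λ²` (finitely many, by level
finiteness, so the sums split too), and the Kerov defect — left-hand side of the Kerov
condition minus `2|λ|` — is additive: `D(λ¹, λ²) = D₁(λ¹) + D₂(λ²)`. A sum `f(x) + g(y)`
is constant on a product of nonempty sets exactly when `f` and `g` are constant.
-/

open scoped BigOperators Classical

namespace IdealGraph

variable {P : Type*} [PartialOrder P]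

/-- The multiplicity function on `J(P₁ ⊔ P₂)` induced by multiplicity functions `κ₁, κ₂`:
an edge changing only the right component gets the `κ₂`-multiplicity of its right projection,
and an edge changing the left component gets the `κ₁`-multiplicity of its left projection. -/
noncomputable def sumKappa {P₁ P₂ : Type*}
    (κ₁ : Finset P₁ → Finset P₁ → ℝ) (κ₂ : Finset P₂ → Finset P₂ → ℝ)
    (μ l : Finset (P₁ ⊕ P₂)) : ℝ :=
  if μ.toLeft = l.toLeft then κ₂ μ.toRight l.toRight else κ₁ μ.toLeft l.toLeft

@[simp] lemma bx_self {Q R : Type*} [AddCommMonoid R] (q : Q → R) (l : Finset Q) :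
    bx q l l = 0 := by
  simp [bx]

section Covers

variable {Q : Type*} [PartialOrder Q]

lemma isIdealF_empty : IsIdealF (∅ : Finset Q) := by
  simp [IsIdealF]

lemma CoversF.ne {μ l : Finset Q} (h : CoversF μ l) : μ ≠ l := by
  rintro rfl
  have := h.2.2.2
  omega

@[simp] lemma ne_upperCover_coe {a : Finset Q} (c : {c // CoversF a c}) : a ≠ c :=
  c.2.ne

@[simp] lemma lowerCover_coe_ne {a : Finset Q} (c : {c // CoversF c a}) :
    (c : Finset Q) ≠ a :=
  c.2.ne

lemma LevelsFinite.finite_upperCovers (hLF : LevelsFinite Q) (l : Finset Q) :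
    {ν | CoversF l ν}.Finite :=
  (hLF (l.card + 1)).subset fun _ hν => ⟨hν.2.1, hν.2.2.2⟩

lemma finite_lowerCovers (l : Finset Q) : {μ | CoversF μ l}.Finite :=
  l.powerset.finite_toSet.subset fun _ hμ => Finset.mem_coe.2 (Finset.mem_powerset.2 hμ.2.2.1)

noncomputable def kerovDefect (κ : Finset Q → Finset Q → ℝ) (q2 : Q → ℂ) (l : Finset Q) : ℂ :=
  (∑' ν : {ν : Finset Q // CoversF l ν}, (κ l ν.1 : ℂ) ^ 2 * bx q2 l ν.1) -
    (∑' μ : {μ : Finset Q // CoversF μ l}, (κ μ.1 l : ℂ) ^ 2 * bx q2 μ.1 l) - 2 * (l.card : ℂ)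

lemma kerovCond_iff_kerovDefect_eq {κ : Finset Q → Finset Q → ℝ} {q2 : Q → ℂ} {t : ℂ} :
    KerovCond κ q2 t ↔ ∀ l, IsIdealF l → kerovDefect κ q2 l = t := by
  simp only [KerovCond, kerovDefect, sub_eq_iff_eq_add']

end Covers

lemma forall_add_eq_iff_exists {α β M : Type*} [AddCommGroup M] {p : α → Prop} {r : β → Prop}
    {f : α → M} {g : β → M} {t : M} (hp : ∃ a, p a) (hr : ∃ b, r b) :
    (∀ a, p a → ∀ b, r b → f a + g b = t) ↔
      ∃ t₁ t₂, t = t₁ + t₂ ∧ (∀ a, p a → f a = t₁) ∧ ∀ b, r b → g b = t₂ := by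
  constructor
  · intro h
    obtain ⟨a₀, ha₀⟩ := hp
    obtain ⟨b₀, hb₀⟩ := hr
    refine ⟨t - g b₀, g b₀, (sub_add_cancel t _).symm,
      fun a ha => eq_sub_of_add_eq (h a ha b₀ hb₀), fun b hb => ?_⟩
    exact add_left_cancel ((h a₀ ha₀ b hb).trans (h a₀ ha₀ b₀ hb₀).symm)
  · rintro ⟨t₁, t₂, rfl, hf, hg⟩ a ha b hb
    rw [hf a ha, hg b hb]

section DisjointUnion

variable {P₁ P₂ : Type*} {a c : Finset P₁} {b d : Finset P₂}

lemma tsum_union_image_disjSum {M : Type*} [AddCommMonoid M] [TopologicalSpace M]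
    [ContinuousAdd M] [T2Space M] (F : Finset (P₁ ⊕ P₂) → M) {S : Set (Finset P₁)}
    {T : Set (Finset P₂)} (hS : S.Finite) (hT : T.Finite) (ha : a ∉ S) :
    ∑' ν : ↥((·.disjSum b) '' S ∪ (a.disjSum ·) '' T), F ν =
      ∑' c : S, F (c.1.disjSum b) + ∑' d : T, F (a.disjSum d.1) := by
  have hdisj : Disjoint ((·.disjSum b) '' S) ((a.disjSum ·) '' T) := by
    rw [Set.disjoint_left]
    rintro _ ⟨c, hc, rfl⟩ ⟨d, -, h⟩
    exact ha ((Finset.disjSum_inj.1 h).1 ▸ hc)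
  rw [Summable.tsum_union_disjoint hdisj ((hS.image _).summable F) ((hT.image _).summable F),
    tsum_image F fun _ _ _ _ h => (Finset.disjSum_inj.1 h).1,
    tsum_image F fun _ _ _ _ h => (Finset.disjSum_inj.1 h).2]

@[simp] lemma sumKappa_disjSum (κ₁ : Finset P₁ → Finset P₁ → ℝ)
    (κ₂ : Finset P₂ → Finset P₂ → ℝ) :
    sumKappa κ₁ κ₂ (a.disjSum b) (c.disjSum d) = if a = c then κ₂ b d else κ₁ a c := by
  simp [sumKappa]

@[simp] lemma bx_disjSum {R : Type*} [AddCommMonoid R] (q : P₁ ⊕ P₂ → R) :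
    bx q (a.disjSum b) (c.disjSum d) =
      bx (fun x => q (Sum.inl x)) a c + bx (fun x => q (Sum.inr x)) b d := by
  rw [bx, bx, bx, ← Finset.sum_disjSum]
  congr 1
  ext (x | x) <;> simp

variable [PartialOrder P₁] [PartialOrder P₂]

@[simp] lemma isIdealF_disjSum : IsIdealF (a.disjSum b) ↔ IsIdealF a ∧ IsIdealF b := by
  simp [IsIdealF, Sum.forall]

lemma forall_isIdealF_sum_iff {p : Finset (P₁ ⊕ P₂) → Prop} :
    (∀ l, IsIdealF l → p l) ↔ ∀ a, IsIdealF a → ∀ b, IsIdealF b → p (a.disjSum b) := by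
  refine ⟨fun h a ha b hb => h _ (isIdealF_disjSum.2 ⟨ha, hb⟩), fun h l hl => ?_⟩
  rw [← l.toLeft_disjSum_toRight] at hl ⊢
  exact h _ (isIdealF_disjSum.1 hl).1 _ (isIdealF_disjSum.1 hl).2

lemma coversF_disjSum_iff :
    CoversF (a.disjSum b) (c.disjSum d) ↔
      (CoversF a c ∧ b = d ∧ IsIdealF b) ∨ (a = c ∧ IsIdealF a ∧ CoversF b d) := by
  simp only [CoversF, isIdealF_disjSum, Finset.disjSum_subset, Finset.toLeft_disjSum,
    Finset.toRight_disjSum, Finset.card_disjSum]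
  constructor
  · rintro ⟨⟨ha, hb⟩, ⟨hc, hd⟩, ⟨hac, hbd⟩, hcard⟩
    have := Finset.card_le_card hac
    have := Finset.card_le_card hbd
    rcases (by omega : (c.card = a.card + 1 ∧ d.card = b.card) ∨
        (c.card = a.card ∧ d.card = b.card + 1)) with ⟨h₁, h₂⟩ | ⟨h₁, h₂⟩
    · exact .inl ⟨⟨ha, hc, hac, h₁⟩, Finset.eq_of_subset_of_card_le hbd h₂.le, hb⟩
    · exact .inr ⟨Finset.eq_of_subset_of_card_le hac h₁.le, ha, hb, hd, hbd, h₂⟩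
  · rintro (⟨⟨ha, hc, hac, h⟩, rfl, hb⟩ | ⟨rfl, ha, hb, hd, hbd, h⟩)
    · exact ⟨⟨ha, hb⟩, ⟨hc, hb⟩, ⟨hac, subset_rfl⟩, by omega⟩
    · exact ⟨⟨ha, hb⟩, ⟨ha, hd⟩, ⟨subset_rfl, hbd⟩, by omega⟩

lemma setOf_disjSum_coversF (ha : IsIdealF a) (hb : IsIdealF b) :
    {ν | CoversF (a.disjSum b) ν} =
      (·.disjSum b) '' {c | CoversF a c} ∪ (a.disjSum ·) '' {d | CoversF b d} := by
  ext ν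
  rw [← ν.toLeft_disjSum_toRight]
  simp only [coversF_disjSum_iff, Set.mem_ofPred_eq, Set.mem_union, Set.mem_image,
    Finset.disjSum_inj]
  aesop

lemma setOf_coversF_disjSum (ha : IsIdealF a) (hb : IsIdealF b) :
    {μ | CoversF μ (a.disjSum b)} =
      (·.disjSum b) '' {c | CoversF c a} ∪ (a.disjSum ·) '' {d | CoversF d b} := by
  ext μ
  rw [← μ.toLeft_disjSum_toRight]
  simp only [coversF_disjSum_iff, Set.mem_ofPred_eq, Set.mem_union, Set.mem_image,
    Finset.disjSum_inj]
  aesop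

lemma tsum_disjSum_coversF {M : Type*} [AddCommMonoid M] [TopologicalSpace M]
    [ContinuousAdd M] [T2Space M] (hLF₁ : LevelsFinite P₁) (hLF₂ : LevelsFinite P₂)
    (ha : IsIdealF a) (hb : IsIdealF b) (F : Finset (P₁ ⊕ P₂) → M) :
    ∑' ν : {ν // CoversF (a.disjSum b) ν}, F ν =
      ∑' c : {c // CoversF a c}, F (c.1.disjSum b) +
        ∑' d : {d // CoversF b d}, F (a.disjSum d.1) :=
  (tsum_congr_set_coe F (setOf_disjSum_coversF ha hb)).trans <|
    tsum_union_image_disjSum F (hLF₁.finite_upperCovers a) (hLF₂.finite_upperCovers b)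
      fun h => h.ne rfl

lemma tsum_coversF_disjSum {M : Type*} [AddCommMonoid M] [TopologicalSpace M]
    [ContinuousAdd M] [T2Space M] (ha : IsIdealF a) (hb : IsIdealF b)
    (F : Finset (P₁ ⊕ P₂) → M) :
    ∑' μ : {μ // CoversF μ (a.disjSum b)}, F μ =
      ∑' c : {c // CoversF c a}, F (c.1.disjSum b) +
        ∑' d : {d // CoversF d b}, F (a.disjSum d.1) :=
  (tsum_congr_set_coe F (setOf_coversF_disjSum ha hb)).trans <|
    tsum_union_image_disjSum F (finite_lowerCovers a) (finite_lowerCovers b) fun h => h.ne rfl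

lemma kerovDefect_disjSum (hLF₁ : LevelsFinite P₁) (hLF₂ : LevelsFinite P₂)
    (κ₁ : Finset P₁ → Finset P₁ → ℝ) (κ₂ : Finset P₂ → Finset P₂ → ℝ) (q2 : P₁ ⊕ P₂ → ℂ)
    (ha : IsIdealF a) (hb : IsIdealF b) :
    kerovDefect (sumKappa κ₁ κ₂) q2 (a.disjSum b) =
      kerovDefect κ₁ (fun x => q2 (Sum.inl x)) a +
        kerovDefect κ₂ (fun x => q2 (Sum.inr x)) b := by
  have up := tsum_disjSum_coversF hLF₁ hLF₂ ha hb
    fun ν => (sumKappa κ₁ κ₂ (a.disjSum b) ν : ℂ) ^ 2 * bx q2 (a.disjSum b) ν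
  have down := tsum_coversF_disjSum ha hb
    fun μ => (sumKappa κ₁ κ₂ μ (a.disjSum b) : ℂ) ^ 2 * bx q2 μ (a.disjSum b)
  rw [kerovDefect, kerovDefect, kerovDefect, up, down]
  simp only [sumKappa_disjSum, bx_disjSum, bx_self, ne_upperCover_coe, lowerCover_coe_ne,
    add_zero, zero_add, Finset.card_disjSum]
  push_cast
  ring

end DisjointUnion

theorem statement3_general {P₁ P₂ : Type*} [PartialOrder P₁] [PartialOrder P₂]
    (κ₁ : Finset P₁ → Finset P₁ → ℝ) (κ₂ : Finset P₂ → Finset P₂ → ℝ)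
    (hLF₁ : LevelsFinite P₁) (hLF₂ : LevelsFinite P₂)
    (q2 : P₁ ⊕ P₂ → ℂ) (t : ℂ) :
    KerovCond (sumKappa κ₁ κ₂) q2 t ↔
      ∃ t₁ t₂ : ℂ, t = t₁ + t₂ ∧
        KerovCond κ₁ (fun x => q2 (Sum.inl x)) t₁ ∧
        KerovCond κ₂ (fun x => q2 (Sum.inr x)) t₂ := by
  simp only [kerovCond_iff_kerovDefect_eq]
  rw [forall_isIdealF_sum_iff]
  refine Iff.trans ?_ (forall_add_eq_iff_exists ⟨∅, isIdealF_empty⟩ ⟨∅, isIdealF_empty⟩)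
  exact forall₂_congr fun a ha => forall₂_congr fun b hb => by
    rw [kerovDefect_disjSum hLF₁ hLF₂ κ₁ κ₂ q2 ha hb]

/-- Kerov conditions on a disjoint union `P = P₁ ⊔ P₂` (so that
`J(P) ≅ J(P₁) × J(P₂)`) correspond exactly to pairs of Kerov conditions on the two
components, the parameters adding up: `t = t₁ + t₂`. -/
theorem statement3 {P₁ P₂ : Type*} [PartialOrder P₁] [PartialOrder P₂]
    (κ₁ : Finset P₁ → Finset P₁ → ℝ) (κ₂ : Finset P₂ → Finset P₂ → ℝ)
    (hκ₁ : EdgePositive κ₁) (hκ₂ : EdgePositive κ₂)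
    (hLF₁ : LevelsFinite P₁) (hLF₂ : LevelsFinite P₂)
    (q2 : P₁ ⊕ P₂ → ℂ) (t : ℂ) :
    KerovCond (sumKappa κ₁ κ₂) q2 t ↔
      ∃ t₁ t₂ : ℂ, t = t₁ + t₂ ∧
        KerovCond κ₁ (fun x => q2 (Sum.inl x)) t₁ ∧
        KerovCond κ₂ (fun x => q2 (Sum.inr x)) t₂ :=
  statement3_general κ₁ κ₂ hLF₁ hLF₂ q2 t

end IdealGraph
end

section
/- Assume κ is UD-self-dual and 𝗊² : P → ℂ satisfies the Kerov condition with parameter t. Then for all λ, μ ∈ 𝔾 with |λ| = n and |μ| = m, the following identity holds: Σ_{ν : ν ↘ λ} κ(λ,ν) 𝗊²(ν∖λ) dim(μ,ν) = Σ_{ρ : ρ ↗ μ} κ(ρ,μ) 𝗊²(μ∖ρ) dim(ρ,λ) + (n+m+t)(n−m+1) dim(μ,λ). -/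
open scoped BigOperators Classical

namespace IdealGraph

variable {P : Type*} [PartialOrder P]

/-! ### Auxiliary lemmas for Statement 7 -/

section S7Aux

variable {P' : Type*} [PartialOrder P']

lemma s7_isIdealF_union {a b : Finset P'} (ha : IsIdealF a) (hb : IsIdealF b) :
    IsIdealF (a ∪ b) := by
  intro x hx y hy
  rcases Finset.mem_union.1 hx with h | h
  · exact Finset.mem_union.2 (Or.inl (ha h hy))
  · exact Finset.mem_union.2 (Or.inr (hb h hy))

lemma s7_isIdealF_inter {a b : Finset P'} (ha : IsIdealF a) (hb : IsIdealF b) :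
    IsIdealF (a ∩ b) := by
  intro x hx y hy
  exact Finset.mem_inter.2 ⟨ha (Finset.mem_inter.1 hx).1 hy, hb (Finset.mem_inter.1 hx).2 hy⟩

/-- The finset of ideals covered by `l`. -/
noncomputable def covDn (l : Finset P') : Finset (Finset P') :=
  l.powerset.filter (fun τ => CoversF τ l)

lemma mem_covDn {τ l : Finset P'} : τ ∈ covDn l ↔ CoversF τ l := by
  simp only [covDn, Finset.mem_filter, Finset.mem_powerset]
  exact ⟨fun h => h.2, fun h => ⟨h.2.2.1, h⟩⟩

lemma s7_coversF_finite (hLF : LevelsFinite P') (l : Finset P') :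
    {ν : Finset P' | CoversF l ν}.Finite :=
  (hLF (l.card + 1)).subset fun ν hν => ⟨hν.2.1, hν.2.2.2⟩

/-- The finset of ideals covering `l`. -/
noncomputable def covUp (hLF : LevelsFinite P') (l : Finset P') : Finset (Finset P') :=
  (s7_coversF_finite hLF l).toFinset

lemma mem_covUp {hLF : LevelsFinite P'} {ν l : Finset P'} :
    ν ∈ covUp hLF l ↔ CoversF l ν :=
  Set.Finite.mem_toFinset _

lemma s7_tsum_subtype_eq_sum {α : Type*} {p : α → Prop} (s : Finset α)
    (hs : ∀ a, a ∈ s ↔ p a) (f : α → ℂ) :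
    ∑' x : {a : α // p a}, f x.1 = ∑ a ∈ s, f a := by
  haveI : Fintype {a : α // p a} := Fintype.subtype s hs
  rw [tsum_fintype]
  exact (Finset.sum_subtype s hs f).symm

lemma s7_dimRel_eq_zero_of_not_subset (κ : Finset P' → Finset P' → ℝ) (k : ℕ)
    {μ l : Finset P'} (h : ¬ μ ⊆ l) : dimRel κ k μ l = 0 := by
  cases k with
  | zero =>
    rw [dimRel, if_neg]
    rintro rfl; exact h subset_rfl
  | succ k =>
    rw [dimRel]
    refine Finset.sum_eq_zero fun x hx => ?_
    rw [if_neg]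
    rintro ⟨-, hsub⟩
    exact h (hsub.trans (Finset.erase_subset _ _))

lemma s7_dimI_of_card_le (κ : Finset P' → Finset P' → ℝ) {μ l : Finset P'}
    (h : l.card ≤ μ.card) : dimI κ μ l = if μ = l then 1 else 0 := by
  unfold dimI
  rw [Nat.sub_eq_zero_of_le h, dimRel]

lemma s7_erase_inj_on (l : Finset P') {x y : P'} (hx : x ∈ l) (hy : y ∈ l)
    (h : l.erase x = l.erase y) : x = y := by
  by_contra hne
  have : y ∈ l.erase x := Finset.mem_erase.2 ⟨fun hc => hne hc.symm, hy⟩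
  rw [h] at this
  exact (Finset.notMem_erase y l) this

lemma s7_covDn_eq_image (l : Finset P') :
    covDn l = (l.filter (fun x => CoversF (l.erase x) l)).image (fun x => l.erase x) := by
  ext τ
  simp only [Finset.mem_image, Finset.mem_filter]
  constructor
  · intro hτ
    have hc := mem_covDn.1 hτ
    have hsub : τ ⊆ l := hc.2.2.1
    have hcard : (l \ τ).card = 1 := by
      have := hc.2.2.2
      rw [Finset.card_sdiff_of_subset hsub]; omega
    obtain ⟨x, hx⟩ := Finset.card_eq_one.1 hcard
    have hxl : x ∈ l := by
      have : x ∈ l \ τ := by rw [hx]; exact Finset.mem_singleton_self x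
      exact (Finset.mem_sdiff.1 this).1
    have hτx : l.erase x = τ := by
      rw [Finset.erase_eq, ← hx, Finset.sdiff_sdiff_self_left,
        Finset.inter_eq_right.2 hsub]
    refine ⟨x, ⟨hxl, ?_⟩, hτx⟩
    rw [hτx]; exact hc
  · rintro ⟨x, ⟨hxl, hcov⟩, rfl⟩
    exact mem_covDn.2 hcov

/-- top-step recursion for relative dimensions -/
lemma s7_dimI_rec (κ : Finset P' → Finset P' → ℝ) {ρ l : Finset P'}
    (h : ρ.card < l.card) :
    dimI κ ρ l = ∑ τ ∈ covDn l, κ τ l * dimI κ ρ τ := by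
  obtain ⟨k, hk⟩ : ∃ k, l.card - ρ.card = k + 1 := ⟨l.card - ρ.card - 1, by omega⟩
  have hR : ∑ τ ∈ covDn l, κ τ l * dimI κ ρ τ
      = ∑ τ ∈ covDn l, κ τ l * dimRel κ k ρ τ := by
    refine Finset.sum_congr rfl fun τ hτ => ?_
    have hc := (mem_covDn.1 hτ).2.2.2
    unfold dimI
    rw [show τ.card - ρ.card = k by omega]
  rw [hR, s7_covDn_eq_image l, Finset.sum_image
    (fun x hx y hy hxy => s7_erase_inj_on l (Finset.mem_filter.1 hx).1
      (Finset.mem_filter.1 hy).1 hxy)]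
  unfold dimI
  rw [hk, dimRel, Finset.sum_filter]
  refine Finset.sum_congr rfl fun x hx => ?_
  by_cases hcov : CoversF (l.erase x) l
  · by_cases hsub : ρ ⊆ l.erase x
    · rw [if_pos ⟨hcov, hsub⟩, if_pos hcov]
    · rw [if_neg (fun hc => hsub hc.2), if_pos hcov,
        s7_dimRel_eq_zero_of_not_subset κ k hsub, mul_zero]
  · rw [if_neg (fun hc => hcov hc.1), if_neg hcov]

lemma s7_dimI_rec_c (κ : Finset P' → Finset P' → ℝ) {ρ l : Finset P'}
    (h : ρ.card < l.card) :
    ((dimI κ ρ l : ℝ) : ℂ) = ∑ τ ∈ covDn l, (κ τ l : ℂ) * ((dimI κ ρ τ : ℝ) : ℂ) := by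
  rw [s7_dimI_rec κ h]
  push_cast
  rfl

lemma s7_sdiff_union (a b : Finset P') : (a ∪ b) \ a = b \ (a ∩ b) := by
  ext x
  simp only [Finset.mem_sdiff, Finset.mem_union, Finset.mem_inter]
  tauto

lemma s7_diamond_down {a b ν : Finset P'} (ha : CoversF a ν) (hb : CoversF b ν)
    (hne : a ≠ b) : CoversF (a ∩ b) a ∧ CoversF (a ∩ b) b ∧ a ∪ b = ν := by
  obtain ⟨hia, hiν, hsa, hca⟩ := ha
  obtain ⟨hib, -, hsb, hcb⟩ := hb
  have hsub : a ∪ b ⊆ ν := Finset.union_subset hsa hsb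
  have hcu : a.card < (a ∪ b).card := by
    rcases (Finset.card_le_card (Finset.subset_union_left : a ⊆ a ∪ b)).lt_or_eq with h | h
    · exact h
    · exfalso
      have hau : a = a ∪ b := Finset.eq_of_subset_of_card_le Finset.subset_union_left (le_of_eq h.symm)
      have : b ⊆ a := by rw [hau]; exact Finset.subset_union_right
      exact hne (Finset.eq_of_subset_of_card_le this (by omega)).symm
  have huν : a ∪ b = ν := Finset.eq_of_subset_of_card_le hsub (by
    have := Finset.card_le_card hsub; omega)
  have hcui : (a ∩ b).card + (a ∪ b).card = a.card + b.card :=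
    Finset.card_inter_add_card_union a b
  have h5 : (a ∪ b).card = ν.card := by rw [huν]
  have hci : a.card = (a ∩ b).card + 1 := by omega
  have hcib : b.card = (a ∩ b).card + 1 := by omega
  exact ⟨⟨s7_isIdealF_inter hia hib, hia, Finset.inter_subset_left, hci⟩,
    ⟨s7_isIdealF_inter hia hib, hib, Finset.inter_subset_right, hcib⟩, huν⟩

lemma s7_diamond_up {τ a b : Finset P'} (ha : CoversF τ a) (hb : CoversF τ b)
    (hne : a ≠ b) : CoversF a (a ∪ b) ∧ CoversF b (a ∪ b) ∧ a ∩ b = τ := by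
  obtain ⟨hiτ, hia, hsa, hca⟩ := ha
  obtain ⟨-, hib, hsb, hcb⟩ := hb
  have hsub : τ ⊆ a ∩ b := Finset.subset_inter hsa hsb
  have hlt : (a ∩ b).card < a.card := by
    rcases (Finset.card_le_card (Finset.inter_subset_left : a ∩ b ⊆ a)).lt_or_eq with h | h
    · exact h
    · exfalso
      have hab : a ∩ b = a := Finset.eq_of_subset_of_card_le Finset.inter_subset_left (le_of_eq h.symm)
      have : a ⊆ b := by rw [← hab]; exact Finset.inter_subset_right
      exact hne (Finset.eq_of_subset_of_card_le this (by omega))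
  have hτab : τ = a ∩ b := Finset.eq_of_subset_of_card_le hsub (by
    have := Finset.card_le_card hsub; omega)
  have hcui : (a ∩ b).card + (a ∪ b).card = a.card + b.card :=
    Finset.card_inter_add_card_union a b
  have h5 : (a ∩ b).card = τ.card := by rw [← hτab]
  have hcu : (a ∪ b).card = a.card + 1 := by omega
  have hcub : (a ∪ b).card = b.card + 1 := by omega
  exact ⟨⟨hia, s7_isIdealF_union hia hib, Finset.subset_union_left, hcu⟩,
    ⟨hib, s7_isIdealF_union hia hib, Finset.subset_union_right, hcub⟩, hτab.symm⟩

end S7Aux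

/-- the combinatorial identity
`Σ_{ν ↘ λ} κ(λ,ν) 𝗊²(ν∖λ) dim(μ,ν) = Σ_{ρ ↗ μ} κ(ρ,μ) 𝗊²(μ∖ρ) dim(ρ,λ)
  + (n+m+t)(n−m+1) dim(μ,λ)`. -/
theorem statement7 {P : Type*} [PartialOrder P]
    (κ : Finset P → Finset P → ℝ) (q2 : P → ℂ) (t : ℂ)
    (hκ : EdgePositive κ) (hLF : LevelsFinite P) (hUD : UDSelfDual κ)
    (hK : KerovCond κ q2 t) :
    ∀ μ l : Finset P, IsIdealF μ → IsIdealF l →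
      ∑' ν : {ν : Finset P // CoversF l ν},
          (κ l ν.1 : ℂ) * bx q2 l ν.1 * (dimI κ μ ν.1 : ℂ)
        = (∑' ρ : {ρ : Finset P // CoversF ρ μ},
              (κ ρ.1 μ : ℂ) * bx q2 ρ.1 μ * (dimI κ ρ.1 l : ℂ))
          + ((l.card : ℂ) + (μ.card : ℂ) + t) * ((l.card : ℂ) - (μ.card : ℂ) + 1) *
              (dimI κ μ l : ℂ) := by
  classical
  have hKer : ∀ l : Finset P, IsIdealF l →
      ∑ ν ∈ covUp hLF l, (κ l ν : ℂ) ^ 2 * bx q2 l ν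
        = ∑ τ ∈ covDn l, (κ τ l : ℂ) ^ 2 * bx q2 τ l + (2 * (l.card : ℂ) + t) := by
    intro l hl
    have h := hK l hl
    rw [s7_tsum_subtype_eq_sum (covUp hLF l) (fun a => mem_covUp)
        (fun ν => (κ l ν : ℂ) ^ 2 * bx q2 l ν),
      s7_tsum_subtype_eq_sum (covDn l) (fun a => mem_covDn)
        (fun μ => (κ μ l : ℂ) ^ 2 * bx q2 μ l)] at h
    linear_combination h
  have key : ∀ n : ℕ, ∀ l : Finset P, IsIdealF l → l.card = n → ∀ μ : Finset P, IsIdealF μ →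
      ∑ ν ∈ covUp hLF l, (κ l ν : ℂ) * bx q2 l ν * (dimI κ μ ν : ℂ)
        = ∑ ρ ∈ covDn μ, (κ ρ μ : ℂ) * bx q2 ρ μ * (dimI κ ρ l : ℂ)
          + ((l.card : ℂ) + (μ.card : ℂ) + t) * ((l.card : ℂ) - (μ.card : ℂ) + 1) *
            (dimI κ μ l : ℂ) := by
    intro n
    induction n using Nat.strong_induction_on with
    | _ n IH =>
    intro l hl hln μ hμ
    subst hln
    by_cases hm1 : l.card + 2 ≤ μ.card
    · have hL : ∀ ν ∈ covUp hLF l, (κ l ν : ℂ) * bx q2 l ν * (dimI κ μ ν : ℂ) = 0 := by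
        intro ν hν
        have hc := (mem_covUp.1 hν).2.2.2
        rw [s7_dimI_of_card_le κ (by omega), if_neg (show ¬ μ = ν by intro h; subst h; omega)]
        simp
      have hR : ∀ ρ ∈ covDn μ, (κ ρ μ : ℂ) * bx q2 ρ μ * (dimI κ ρ l : ℂ) = 0 := by
        intro ρ hρ
        have hc := (mem_covDn.1 hρ).2.2.2
        rw [s7_dimI_of_card_le κ (by omega), if_neg (show ¬ ρ = l by intro h; subst h; omega)]
        simp
      rw [Finset.sum_eq_zero hL, Finset.sum_eq_zero hR,
        s7_dimI_of_card_le κ (by omega), if_neg (show ¬ μ = l by intro h; subst h; omega)]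
      simp
    by_cases hm2 : μ.card = l.card + 1
    · have hL : ∀ ν ∈ covUp hLF l, (κ l ν : ℂ) * bx q2 l ν * (dimI κ μ ν : ℂ)
          = if μ = ν then (κ l ν : ℂ) * bx q2 l ν else 0 := by
        intro ν hν
        have hc := (mem_covUp.1 hν).2.2.2
        rw [s7_dimI_of_card_le κ (by omega)]
        split_ifs with h <;> simp
      have hR : ∀ ρ ∈ covDn μ, (κ ρ μ : ℂ) * bx q2 ρ μ * (dimI κ ρ l : ℂ)
          = if ρ = l then (κ ρ μ : ℂ) * bx q2 ρ μ else 0 := by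
        intro ρ hρ
        have hc := (mem_covDn.1 hρ).2.2.2
        rw [s7_dimI_of_card_le κ (by omega)]
        split_ifs with h <;> simp
      rw [Finset.sum_congr rfl hL,
        Finset.sum_ite_eq (covUp hLF l) μ (fun ν => (κ l ν : ℂ) * bx q2 l ν),
        Finset.sum_congr rfl hR,
        Finset.sum_ite_eq' (covDn μ) l (fun ρ => (κ ρ μ : ℂ) * bx q2 ρ μ),
        s7_dimI_of_card_le κ (by omega), if_neg (show ¬ μ = l by intro h; subst h; omega)]
      by_cases hcov : CoversF l μ
      · rw [if_pos (mem_covUp.2 hcov), if_pos (mem_covDn.2 hcov)]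
        push_cast
        ring
      · rw [if_neg (fun h => hcov (mem_covUp.1 h)), if_neg (fun h => hcov (mem_covDn.1 h))]
        push_cast
        ring
    -- main case : μ.card ≤ l.card
    have hmn : μ.card ≤ l.card := by omega
    have step2 : ∀ ν ∈ covUp hLF l,
        ∑ lm ∈ covDn ν, (κ l ν : ℂ) * bx q2 l ν * ((κ lm ν : ℂ) * (dimI κ μ lm : ℂ))
        = (κ l ν : ℂ) ^ 2 * bx q2 l ν * (dimI κ μ l : ℂ)
          + ∑ lm ∈ (covDn ν).erase l,
            (κ l ν : ℂ) * bx q2 l ν * ((κ lm ν : ℂ) * (dimI κ μ lm : ℂ)) := by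
      intro ν hν
      have hmem : l ∈ covDn ν := mem_covDn.2 (mem_covUp.1 hν)
      rw [← Finset.add_sum_erase _ _ hmem]
      congr 1
      ring
    have step5 : ∀ τ ∈ covDn l,
        ∑ lm ∈ (covUp hLF τ).erase l, (κ τ lm : ℂ) * bx q2 τ lm * (dimI κ μ lm : ℂ)
        = (∑ lm ∈ covUp hLF τ, (κ τ lm : ℂ) * bx q2 τ lm * (dimI κ μ lm : ℂ))
          - (κ τ l : ℂ) * bx q2 τ l * (dimI κ μ l : ℂ) := by
      intro τ hτ
      exact Finset.sum_erase_eq_sub (mem_covUp.2 (mem_covDn.1 hτ))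
    have step6 : ∀ τ ∈ covDn l,
        ∑ lm ∈ covUp hLF τ, (κ τ lm : ℂ) * bx q2 τ lm * (dimI κ μ lm : ℂ)
        = ∑ ρ ∈ covDn μ, (κ ρ μ : ℂ) * bx q2 ρ μ * (dimI κ ρ τ : ℂ)
          + ((l.card : ℂ) - 1 + (μ.card : ℂ) + t) * (((l.card : ℂ) - 1) - (μ.card : ℂ) + 1) *
            (dimI κ μ τ : ℂ) := by
      intro τ hτ
      have hc := (mem_covDn.1 hτ).2.2.2
      have h6 := IH τ.card (by omega) τ (mem_covDn.1 hτ).1 rfl μ hμ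
      have hcast : (l.card : ℂ) = (τ.card : ℂ) + 1 := by exact_mod_cast congrArg (Nat.cast (R := ℂ)) hc
      rw [h6, hcast]
      ring
    -- global equalities
    have E1 : ∑ ν ∈ covUp hLF l, (κ l ν : ℂ) * bx q2 l ν * (dimI κ μ ν : ℂ)
        = ∑ ν ∈ covUp hLF l, ∑ lm ∈ covDn ν,
            (κ l ν : ℂ) * bx q2 l ν * ((κ lm ν : ℂ) * (dimI κ μ lm : ℂ)) := by
      refine Finset.sum_congr rfl fun ν hν => ?_
      have hc := (mem_covUp.1 hν).2.2.2
      rw [s7_dimI_rec_c κ (show μ.card < ν.card by omega), Finset.mul_sum]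
    have E2 : ∑ ν ∈ covUp hLF l, ∑ lm ∈ covDn ν,
            (κ l ν : ℂ) * bx q2 l ν * ((κ lm ν : ℂ) * (dimI κ μ lm : ℂ))
        = (∑ ν ∈ covUp hLF l, (κ l ν : ℂ) ^ 2 * bx q2 l ν * (dimI κ μ l : ℂ))
          + ∑ ν ∈ covUp hLF l, ∑ lm ∈ (covDn ν).erase l,
              (κ l ν : ℂ) * bx q2 l ν * ((κ lm ν : ℂ) * (dimI κ μ lm : ℂ)) := by
      rw [← Finset.sum_add_distrib]
      exact Finset.sum_congr rfl step2
    have E2a : ∑ ν ∈ covUp hLF l, (κ l ν : ℂ) ^ 2 * bx q2 l ν * (dimI κ μ l : ℂ)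
        = (∑ ν ∈ covUp hLF l, (κ l ν : ℂ) ^ 2 * bx q2 l ν) * (dimI κ μ l : ℂ) :=
      (Finset.sum_mul _ _ _).symm
    have E3 := hKer l hl
    have E4 : ∑ ν ∈ covUp hLF l, ∑ lm ∈ (covDn ν).erase l,
            (κ l ν : ℂ) * bx q2 l ν * ((κ lm ν : ℂ) * (dimI κ μ lm : ℂ))
        = ∑ τ ∈ covDn l, ∑ lm ∈ (covUp hLF τ).erase l,
            (κ τ l : ℂ) * ((κ τ lm : ℂ) * bx q2 τ lm * (dimI κ μ lm : ℂ)) := by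
      rw [Finset.sum_sigma', Finset.sum_sigma']
      refine Finset.sum_nbij' (fun p => ⟨l ∩ p.2, p.2⟩) (fun p => ⟨l ∪ p.2, p.2⟩)
        ?_ ?_ ?_ ?_ ?_
      · rintro ⟨ν, lm⟩ hp
        simp only [Finset.mem_sigma, Finset.mem_erase] at hp ⊢
        have hcov1 : CoversF l ν := mem_covUp.1 hp.1
        have hcov2 : CoversF lm ν := mem_covDn.1 hp.2.2
        obtain ⟨d1, d2, -⟩ := s7_diamond_down hcov1 hcov2 (fun h => hp.2.1 h.symm)
        exact ⟨mem_covDn.2 d1, hp.2.1, mem_covUp.2 d2⟩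
      · rintro ⟨τ, lm⟩ hp
        simp only [Finset.mem_sigma, Finset.mem_erase] at hp ⊢
        have hcov1 : CoversF τ l := mem_covDn.1 hp.1
        have hcov2 : CoversF τ lm := mem_covUp.1 hp.2.2
        obtain ⟨d1, d2, -⟩ := s7_diamond_up hcov1 hcov2 (fun h => hp.2.1 h.symm)
        exact ⟨mem_covUp.2 d1, hp.2.1, mem_covDn.2 d2⟩
      · rintro ⟨ν, lm⟩ hp
        simp only [Finset.mem_sigma, Finset.mem_erase] at hp
        have hcov1 : CoversF l ν := mem_covUp.1 hp.1
        have hcov2 : CoversF lm ν := mem_covDn.1 hp.2.2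
        obtain ⟨-, -, d3⟩ := s7_diamond_down hcov1 hcov2 (fun h => hp.2.1 h.symm)
        simp [d3]
      · rintro ⟨τ, lm⟩ hp
        simp only [Finset.mem_sigma, Finset.mem_erase] at hp
        have hcov1 : CoversF τ l := mem_covDn.1 hp.1
        have hcov2 : CoversF τ lm := mem_covUp.1 hp.2.2
        obtain ⟨-, -, d3⟩ := s7_diamond_up hcov1 hcov2 (fun h => hp.2.1 h.symm)
        simp [d3]
      · rintro ⟨ν, lm⟩ hp
        simp only [Finset.mem_sigma, Finset.mem_erase] at hp
        have hcov1 : CoversF l ν := mem_covUp.1 hp.1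
        have hcov2 : CoversF lm ν := mem_covDn.1 hp.2.2
        have hne : lm ≠ l := hp.2.1
        obtain ⟨d1, d2, d3⟩ := s7_diamond_down hcov1 hcov2 (fun h => hne h.symm)
        have hbox : bx q2 l ν = bx q2 (l ∩ lm) lm := by
          unfold bx
          rw [← d3, s7_sdiff_union]
        have hud : (κ (l ∩ lm) l : ℂ) * (κ (l ∩ lm) lm : ℂ)
            = (κ l ν : ℂ) * (κ lm ν : ℂ) := by
          exact_mod_cast congrArg (fun x : ℝ => (x : ℂ))
            (hUD (l ∩ lm) lm l ν d2 hcov2 d1 hcov1 hne)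
        rw [hbox]
        linear_combination (-(bx q2 (l ∩ lm) lm * (dimI κ μ lm : ℂ))) * hud
    have E5 : ∑ τ ∈ covDn l, ∑ lm ∈ (covUp hLF τ).erase l,
            (κ τ l : ℂ) * ((κ τ lm : ℂ) * bx q2 τ lm * (dimI κ μ lm : ℂ))
        = ∑ τ ∈ covDn l, (κ τ l : ℂ) *
            ((∑ ρ ∈ covDn μ, (κ ρ μ : ℂ) * bx q2 ρ μ * (dimI κ ρ τ : ℂ)
              + ((l.card : ℂ) - 1 + (μ.card : ℂ) + t) * (((l.card : ℂ) - 1) - (μ.card : ℂ) + 1) *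
                (dimI κ μ τ : ℂ))
            - (κ τ l : ℂ) * bx q2 τ l * (dimI κ μ l : ℂ)) := by
      refine Finset.sum_congr rfl fun τ hτ => ?_
      rw [← Finset.mul_sum, step5 τ hτ, step6 τ hτ]
    have E7 : ∑ τ ∈ covDn l, (κ τ l : ℂ) *
            ((∑ ρ ∈ covDn μ, (κ ρ μ : ℂ) * bx q2 ρ μ * (dimI κ ρ τ : ℂ)
              + ((l.card : ℂ) - 1 + (μ.card : ℂ) + t) * (((l.card : ℂ) - 1) - (μ.card : ℂ) + 1) *
                (dimI κ μ τ : ℂ))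
            - (κ τ l : ℂ) * bx q2 τ l * (dimI κ μ l : ℂ))
        = (∑ τ ∈ covDn l, ∑ ρ ∈ covDn μ,
              (κ τ l : ℂ) * ((κ ρ μ : ℂ) * bx q2 ρ μ * (dimI κ ρ τ : ℂ)))
          + (((l.card : ℂ) - 1 + (μ.card : ℂ) + t) * (((l.card : ℂ) - 1) - (μ.card : ℂ) + 1) *
              (∑ τ ∈ covDn l, (κ τ l : ℂ) * (dimI κ μ τ : ℂ))
            - (∑ τ ∈ covDn l, (κ τ l : ℂ) ^ 2 * bx q2 τ l) * (dimI κ μ l : ℂ)) := by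
      have e7a : ∀ τ ∈ covDn l, (κ τ l : ℂ) *
            ((∑ ρ ∈ covDn μ, (κ ρ μ : ℂ) * bx q2 ρ μ * (dimI κ ρ τ : ℂ)
              + ((l.card : ℂ) - 1 + (μ.card : ℂ) + t) * (((l.card : ℂ) - 1) - (μ.card : ℂ) + 1) *
                (dimI κ μ τ : ℂ))
            - (κ τ l : ℂ) * bx q2 τ l * (dimI κ μ l : ℂ))
          = (∑ ρ ∈ covDn μ, (κ τ l : ℂ) * ((κ ρ μ : ℂ) * bx q2 ρ μ * (dimI κ ρ τ : ℂ)))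
            + (((l.card : ℂ) - 1 + (μ.card : ℂ) + t) * (((l.card : ℂ) - 1) - (μ.card : ℂ) + 1) *
                ((κ τ l : ℂ) * (dimI κ μ τ : ℂ))
              - ((κ τ l : ℂ) ^ 2 * bx q2 τ l) * (dimI κ μ l : ℂ)) := by
        intro τ hτ
        rw [← Finset.mul_sum]
        ring
      rw [Finset.sum_congr rfl e7a, Finset.sum_add_distrib, Finset.sum_sub_distrib,
        ← Finset.mul_sum, ← Finset.sum_mul]
    have E8 : ∑ τ ∈ covDn l, ∑ ρ ∈ covDn μ,
            (κ τ l : ℂ) * ((κ ρ μ : ℂ) * bx q2 ρ μ * (dimI κ ρ τ : ℂ))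
        = ∑ ρ ∈ covDn μ, (κ ρ μ : ℂ) * bx q2 ρ μ * (dimI κ ρ l : ℂ) := by
      rw [Finset.sum_comm]
      refine Finset.sum_congr rfl fun ρ hρ => ?_
      have hc := (mem_covDn.1 hρ).2.2.2
      rw [s7_dimI_rec_c κ (show ρ.card < l.card by omega), Finset.mul_sum]
      exact Finset.sum_congr rfl fun τ hτ => by ring
    by_cases hme : μ.card = l.card
    · have E9c : ((l.card : ℂ) - 1 + (μ.card : ℂ) + t) * (((l.card : ℂ) - 1) - (μ.card : ℂ) + 1)
          = 0 := by
        have : ((μ.card : ℕ) : ℂ) = ((l.card : ℕ) : ℂ) := by exact_mod_cast congrArg (Nat.cast (R := ℂ)) hme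
        rw [this]
        ring
      linear_combination E1 + E2 + E2a + (dimI κ μ l : ℂ) * E3 + E4 + E5 + E7 + E8
        + ((∑ τ ∈ covDn l, (κ τ l : ℂ) * (dimI κ μ τ : ℂ)) - (dimI κ μ l : ℂ)) * E9c
    · have hlt : μ.card < l.card := by omega
      have E9 : (∑ τ ∈ covDn l, (κ τ l : ℂ) * (dimI κ μ τ : ℂ)) = (dimI κ μ l : ℂ) :=
        (s7_dimI_rec_c κ hlt).symm
      linear_combination E1 + E2 + E2a + (dimI κ μ l : ℂ) * E3 + E4 + E5 + E7 + E8
        + (((l.card : ℂ) - 1 + (μ.card : ℂ) + t) * (((l.card : ℂ) - 1) - (μ.card : ℂ) + 1)) * E9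
  intro μ l hμ hl
  rw [s7_tsum_subtype_eq_sum (covUp hLF l) (fun a => mem_covUp)
      (fun ν => (κ l ν : ℂ) * bx q2 l ν * (dimI κ μ ν : ℂ)),
    s7_tsum_subtype_eq_sum (covDn μ) (fun a => mem_covDn)
      (fun ρ => (κ ρ μ : ℂ) * bx q2 ρ μ * (dimI κ ρ l : ℂ))]
  exact key l.card l hl rfl μ hμ

end IdealGraph
end
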